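/- arXiv:1404.1041 — 4 statements merged into one kernel-verified Lean document; each statement's English description precedes it below -/
import Mathlib

section
/- Let S be a local ring, let β : R → S be a homomorphism of commutative rings, and let I be an ideal of R. If the extended ideal β(I)·S is a principal ideal generated by a non-zero divisor of S, then there exists an element f ∈ I such that β(f) generates β(I)·S. -/
/-!
Multiplication by the non-zero-divisor `g` identifies `S` with `(g)`, so the quotients `β f / g`,
`f ∈ I`, generate the unit ideal. In a local ring one of them is then a unit, and the
corresponding `β f` generates `(g)`.
-/

open Ideal

theorem IsLocalRing.exists_isUnit_of_span_eq_top {S : Type*} [CommRing S] [IsLocalRing S]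
    {s : Set S} (hs : span s = ⊤) : ∃ x ∈ s, IsUnit x := by
  by_contra! h
  refine (maximalIdeal.isMaximal S).ne_top (top_le_iff.mp ?_)
  exact hs ▸ span_le.mpr fun x hx ↦ (mem_maximalIdeal x).mpr (h x hx)

theorem span_preimage_mul_right_eq_top {S : Type*} [CommRing S] {g : S}
    (hg : g ∈ nonZeroDivisors S) {s : Set S} (hs : span s = span {g}) :
    span ((· * g) ⁻¹' s) = ⊤ := by
  let φ := LinearMap.toSpanSingleton S S g
  have hφ : Function.Injective φ := (isRegular_iff_mem_nonZeroDivisors.mpr hg).right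
  have hs_range : s ⊆ Set.range φ := fun t ht ↦ mem_span_singleton'.mp (hs ▸ subset_span ht)
  apply Submodule.map_injective_of_injective hφ
  change Submodule.map φ (span (φ ⁻¹' s)) = _
  rw [Submodule.map_span, Set.image_preimage_eq_of_subset hs_range, Submodule.map_top,
    LinearMap.range_toSpanSingleton]
  exact hs

theorem IsLocalRing.exists_mem_span_eq_span_singleton {S : Type*} [CommRing S] [IsLocalRing S]
    {g : S} (hg : g ∈ nonZeroDivisors S) {s : Set S} (hs : span s = span {g}) :
    ∃ t ∈ s, span s = span {t} := by
  obtain ⟨c, hc, hunit⟩ := exists_isUnit_of_span_eq_top (span_preimage_mul_right_eq_top hg hs)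
  exact ⟨c * g, hc, by rw [hs, span_singleton_mul_left_unit hunit]⟩

/-- Let `S` be a local ring, `β : R → S` a ring homomorphism and `I` an ideal of `R`.
If the extended ideal `β(I)·S` is a principal ideal generated by a non-zero divisor of
`S`, then some element `f ∈ I` has image `β f` generating `β(I)·S`. -/
theorem exists_generator_in_image_of_principal
    {R S : Type*} [CommRing R] [CommRing S] [IsLocalRing S]
    (β : R →+* S) (I : Ideal R)
    (h : ∃ g : S, g ∈ nonZeroDivisors S ∧ I.map β = Ideal.span {g}) :
    ∃ f ∈ I, I.map β = Ideal.span {β f} := by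
  obtain ⟨g, hg, hspan⟩ := h
  obtain ⟨_, ⟨f, hf, rfl⟩, hgen⟩ := IsLocalRing.exists_mem_span_eq_span_singleton hg hspan
  exact ⟨f, hf, hgen⟩
end

section
/- Let β : R → S be a homomorphism of commutative rings, let I be an ideal of R, and let g ∈ I be an element such that β(g) is a non-zero divisor of S which generates the extended ideal β(I)·S. Let R[Ig^{-1}] denote the R-subalgebra of the localization R_g of R away from g generated by all fractions h/g with h ∈ I. Then there exists a unique ring homomorphism δ : R[Ig^{-1}] → S whose composition with the canonical homomorphism R → R[Ig^{-1}] equals β. -/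
/-- Let `β : R → S` be a ring homomorphism, `I` an ideal of `R` and `g ∈ I` an element
such that `β g` is a non-zero divisor of `S` generating the extended ideal `β(I)·S`.
Let `R[Ig⁻¹]` be the `R`-subalgebra of the localization `R_g` generated by all
fractions `h/g` with `h ∈ I`. Then there is a unique ring homomorphism
`δ : R[Ig⁻¹] → S` whose composition with the canonical map `R → R[Ig⁻¹]` is `β`. -/
theorem exists_unique_hom_from_blowup_chart
    {R S : Type*} [CommRing R] [CommRing S]
    (β : R →+* S) (I : Ideal R) (g : R) (hg : g ∈ I)
    (hnzd : β g ∈ nonZeroDivisors S)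
    (hgen : I.map β = Ideal.span {β g}) :
    ∃! δ : (Algebra.adjoin R {x : Localization.Away g |
        ∃ h ∈ I, x * algebraMap R (Localization.Away g) g =
          algebraMap R (Localization.Away g) h}) →+* S,
      ∀ r : R, δ (algebraMap R
        (Algebra.adjoin R {x : Localization.Away g |
          ∃ h ∈ I, x * algebraMap R (Localization.Away g) g =
            algebraMap R (Localization.Away g) h}) r) = β r := by
  set s : Set (Localization.Away g) := {x : Localization.Away g |
      ∃ h ∈ I, x * algebraMap R (Localization.Away g) g =
        algebraMap R (Localization.Away g) h} with hs
  set A := Algebra.adjoin R s with hA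
  set Sg := Localization.Away (β g)
  set φ : Localization.Away g →+* Sg := Localization.awayMap β g with hφ
  set ι : S →+* Sg := algebraMap S Sg with hι
  have hιinj : Function.Injective ι := by
    apply IsLocalization.injective (M := Submonoid.powers (β g)) Sg
    rintro x ⟨n, rfl⟩
    exact pow_mem hnzd n
  have hφalg : ∀ r : R, φ (algebraMap R (Localization.Away g) r) = ι (β r) := by
    intro r
    simp only [hφ, hι, Localization.awayMap, IsLocalization.Away.map]
    rw [IsLocalization.map_eq]
  have hgunit : IsUnit (ι (β g)) := IsLocalization.Away.algebraMap_isUnit (β g)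
  have hrange : ∀ x : Localization.Away g, x ∈ A → φ x ∈ ι.range := by
    intro x hx
    induction hx using Algebra.adjoin_induction with
    | mem x hx =>
      obtain ⟨h, hI, hxg⟩ := hx
      have hβh : β h ∈ Ideal.span {β g} := hgen ▸ Ideal.mem_map_of_mem β hI
      obtain ⟨c, hc⟩ := Ideal.mem_span_singleton'.mp hβh
      refine ⟨c, ?_⟩
      have h1 := congrArg φ hxg
      rw [map_mul, hφalg, hφalg] at h1
      have h2 : ι (β g) * ι c = ι (β g) * φ x := by
        rw [mul_comm _ (φ x), h1, ← map_mul, mul_comm (β g) c, hc]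
      exact hgunit.mul_left_cancel h2
    | algebraMap r => exact ⟨β r, (hφalg r).symm⟩
    | add x y _ _ hx hy => rw [map_add]; exact add_mem hx hy
    | mul x y _ _ hx hy => rw [map_mul]; exact mul_mem hx hy
  -- define δ
  choose d hd using hrange
  let δ : A →+* S :=
  { toFun := fun x => d x.1 x.2
    map_one' := by apply hιinj; rw [hd]; simp
    map_mul' := fun x y => by apply hιinj; rw [hd]; push_cast; simp only [map_mul, hd]
    map_zero' := by apply hιinj; rw [hd]; simp
    map_add' := fun x y => by apply hιinj; rw [hd]; push_cast; simp only [map_add, hd] }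
  have hδ : ∀ r : R, δ (algebraMap R A r) = β r := by
    intro r
    apply hιinj
    show ι (d _ _) = _
    rw [hd, ← hφalg]
    rfl
  refine ⟨δ, hδ, ?_⟩
  -- uniqueness
  intro δ' hδ'
  ext x
  have htop := Algebra.adjoin_adjoin_coe_preimage (R := R) (s := s)
  have hx : x ∈ Algebra.adjoin R (((↑) : A → Localization.Away g) ⁻¹' s) := htop ▸ Algebra.mem_top
  induction hx using Algebra.adjoin_induction with
  | mem x hx =>
    obtain ⟨h, hI, hxg⟩ := hx
    have hxgA : x * algebraMap R A g = algebraMap R A h := Subtype.ext hxg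
    have h1 : δ' x * β g = β h := by
      rw [← hδ' g, ← hδ' h, ← map_mul, hxgA]
    have h2 : δ x * β g = β h := by
      rw [← hδ g, ← hδ h, ← map_mul, hxgA]
    exact (mul_cancel_right_mem_nonZeroDivisors hnzd).mp (h1.trans h2.symm)
  | algebraMap r => rw [hδ' r, hδ r]
  | add x y _ _ hx hy => rw [RingHom.map_add, RingHom.map_add, hx, hy]
  | mul x y _ _ hx hy => rw [RingHom.map_mul, RingHom.map_mul, hx, hy]
end

section
/- Let p be a prime number, let K be a commutative ring of characteristic p, and let g and h be multivariate polynomials over K in variables indexed by a set σ. Assume that every exponent vector α in the support of g has at least one component not divisible by p. Then for every α in the support of g, the coefficient of h^p + g at α equals the coefficient of g at α; in particular the support of g is contained in the support of h^p + g, so if g is nonzero then h^p + g is nonzero and the minimal total degree of a monomial of h^p + g is at most the minimal total degree of a monomial of g. -/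
open MvPolynomial

/-- Over a ring of exponential characteristic `p`, `f ^ p` is the Frobenius image of
`expand p f`, so its support consists of multiples of `p`. -/
theorem MvPolynomial.coeff_pow_expChar_of_not_dvd {σ R : Type*} [CommSemiring R] (p : ℕ)
    [ExpChar R p] (f : MvPolynomial σ R) {m : σ →₀ ℕ} {i : σ} (h : ¬ p ∣ m i) :
    (f ^ p).coeff m = 0 := by
  rw [← map_frobenius_expand p, coeff_map, coeff_expand_of_not_dvd f h, map_zero]

/-- Let `K` be a commutative ring of prime characteristic `p` and `g`, `h` multivariate
polynomials over `K`. If every exponent vector in the support of `g` has some component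
not divisible by `p`, then the coefficients of `h^p + g` on the support of `g` agree
with those of `g`; in particular `supp g ⊆ supp (h^p + g)`, so if `g ≠ 0` then
`h^p + g ≠ 0` and the minimal total degree of a monomial of `h^p + g` is at most the
minimal total degree of a monomial of `g`. -/
theorem no_cancellation_with_pth_power
    {p : ℕ} (hp : p.Prime) {K : Type*} [CommRing K] [CharP K p]
    {σ : Type*} (g h : MvPolynomial σ K)
    (hg : ∀ α ∈ g.support, ∃ s, ¬ (p ∣ α s)) :
    (∀ α ∈ g.support, (h ^ p + g).coeff α = g.coeff α) ∧
    g.support ⊆ (h ^ p + g).support ∧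
    (g ≠ 0 → (h ^ p + g ≠ 0 ∧
      sInf ((fun α : σ →₀ ℕ => α.sum fun _ e => e) ''
          ((h ^ p + g).support : Set (σ →₀ ℕ))) ≤
        sInf ((fun α : σ →₀ ℕ => α.sum fun _ e => e) '' (g.support : Set (σ →₀ ℕ))))) := by
  have : Fact p.Prime := ⟨hp⟩
  have hcoeff : ∀ α ∈ g.support, (h ^ p + g).coeff α = g.coeff α := fun α hα => by
    obtain ⟨s, hs⟩ := hg α hα
    rw [coeff_add, coeff_pow_expChar_of_not_dvd p h hs, zero_add]
  have hsupp : g.support ⊆ (h ^ p + g).support := fun α hα => by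
    rw [mem_support_iff, hcoeff α hα]
    exact mem_support_iff.mp hα
  refine ⟨hcoeff, hsupp, fun hg0 => ?_⟩
  have hne : g.support.Nonempty := support_nonempty.mpr hg0
  exact ⟨support_nonempty.mp (hne.mono hsupp),
    csInf_le_csInf (OrderBot.bddBelow _) ((Finset.coe_nonempty.mpr hne).image _)
      (Set.image_mono (Finset.coe_subset.mpr hsupp))⟩
end

section
/- Let K be a field, let I be the ideal of K[x,y,z] generated by y²−xz, yz−x³ and z²−x²y, and let f = x⁵ + xy³ + z³ − 3x²yz. Then x·f ∈ I², x ∉ I, and f ∉ I². In particular, f lies in the contraction to K[x,y,z] of I²·K[x,y,z]_I but not in I², i.e. the second symbolic power of I strictly contains I². -/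
open MvPolynomial

/-- Macaulay's example: for the ideal `I = (y² - xz, yz - x³, z² - x²y)` of `K[x,y,z]`
(the prime of the monomial curve `t ↦ (t³, t⁴, t⁵)`) and
`f = x⁵ + xy³ + z³ - 3x²yz`, one has `x·f ∈ I²`, `x ∉ I` and `f ∉ I²`. In particular
`f` lies in the second symbolic power of `I` (there is `s ∉ I` with `s·f ∈ I²`) but
not in `I²`, so the second symbolic power strictly contains `I²`. -/
theorem symbolic_square_strictly_contains_square {K : Type*} [Field K] :
    let x : MvPolynomial (Fin 3) K := X 0
    let y : MvPolynomial (Fin 3) K := X 1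
    let z : MvPolynomial (Fin 3) K := X 2
    let I : Ideal (MvPolynomial (Fin 3) K) :=
      Ideal.span {y ^ 2 - x * z, y * z - x ^ 3, z ^ 2 - x ^ 2 * y}
    let f : MvPolynomial (Fin 3) K := x ^ 5 + x * y ^ 3 + z ^ 3 - 3 * x ^ 2 * y * z
    x * f ∈ I ^ 2 ∧ x ∉ I ∧ f ∉ I ^ 2 ∧ ∃ s ∉ I, s * f ∈ I ^ 2 := by
  intro x y z I f
  have hg1 : y ^ 2 - x * z ∈ I := Ideal.subset_span (by simp)
  have hg2 : y * z - x ^ 3 ∈ I := Ideal.subset_span (by simp)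
  have hg3 : z ^ 2 - x ^ 2 * y ∈ I := Ideal.subset_span (by simp)
  have hxf : x * f ∈ I ^ 2 := by
    have : x * f = (y * z - x ^ 3) * (y * z - x ^ 3)
        - (y ^ 2 - x * z) * (z ^ 2 - x ^ 2 * y) := by ring
    rw [this, pow_two]
    exact sub_mem (Ideal.mul_mem_mul hg2 hg2) (Ideal.mul_mem_mul hg1 hg3)
  have hxI : x ∉ I := by
    intro hx
    have hle : I ≤ RingHom.ker (eval (fun _ => (1 : K))) := by
      rw [Ideal.span_le]
      intro p hp
      simp only [Set.mem_insert_iff, Set.mem_singleton_iff] at hp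
      rcases hp with h | h | h <;> subst h <;>
        simp [RingHom.mem_ker, x, y, z]
    have := hle hx
    simp [RingHom.mem_ker, x] at this
  have hfI : f ∉ I ^ 2 := by
    intro hf
    set φ : MvPolynomial (Fin 3) K →ₐ[K] Polynomial K :=
      aeval ![0, 0, Polynomial.X]
    have hmapI : Ideal.map φ.toRingHom I ≤ Ideal.span {Polynomial.X ^ 2} := by
      rw [Ideal.map_le_iff_le_comap, Ideal.span_le]
      intro p hp
      simp only [Set.mem_insert_iff, Set.mem_singleton_iff] at hp
      rcases hp with h | h | h <;> subst h <;>
        simp [Ideal.mem_comap, x, y, z, φ] <;>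
        exact Ideal.subset_span rfl
    have hφf : φ f ∈ Ideal.span {Polynomial.X ^ 4} := by
      have h1 : φ f ∈ Ideal.map φ.toRingHom (I ^ 2) := Ideal.mem_map_of_mem _ hf
      rw [Ideal.map_pow] at h1
      have h2 : Ideal.map φ.toRingHom I ^ 2 ≤ Ideal.span {Polynomial.X ^ 2} ^ 2 :=
        Ideal.pow_right_mono hmapI 2
      have h3 := h2 h1
      rwa [Ideal.span_singleton_pow, ← pow_mul] at h3
    have hφfval : φ f = Polynomial.X ^ 3 := by
      simp [f, x, y, z, φ]
    rw [hφfval, Ideal.mem_span_singleton] at hφf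
    have := Polynomial.natDegree_le_of_dvd hφf (by exact pow_ne_zero _ Polynomial.X_ne_zero)
    simp [Polynomial.natDegree_X_pow] at this
  exact ⟨hxf, hxI, hfI, x, hxI, hxf⟩
end
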